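/- Let s, k, d be positive integers with s and k coprime and s ≥ 2. If 1 < s̄·s̃ mod k ≤ d < k, then the maximum possible hook length of an (s,s+k)-core partition with d-distinct parts is H_d(s,k) = B − s − 1. -/

import Mathlib

/-- A `D`-distinct `(S, S+K)`-core β-set: a finite nonempty set of positive integers,
closed under subtracting `S` and `S + K` (when the result stays positive, which is
automatic for elements of `P`), whose distinct elements differ by more than `D`. -/
def IsCoreBeta (S K D : ℕ) (B : Finset ℕ) : Prop :=
  B.Nonempty ∧ (∀ x ∈ B, 0 < x) ∧
  (∀ x ∈ B, S ≤ x → x - S ∈ B) ∧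
  (∀ x ∈ B, S + K ≤ x → x - (S + K) ∈ B) ∧
  (∀ x ∈ B, ∀ y ∈ B, x ≠ y → (D : ℤ) < |(x : ℤ) - (y : ℤ)|)

/-- All hook lengths attained by `D`-distinct `(S, S+K)`-core β-sets; its greatest
element is the maximum possible hook length `H_D(S, K)`. -/
def HookLengths (S K D : ℕ) : Set ℕ :=
  {n | ∃ B : Finset ℕ, IsCoreBeta S K D B ∧ n ∈ B}
/-- `s̃ = min { (ℓ ⬝ s̄⁻¹) mod k : ℓ ∈ ℤ, -d ≤ ℓ ≤ d, ℓ ≠ 0 }`, where `s̄ = s mod k`: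
the residue `r ∈ [0, k)` satisfies `r = ℓ ⬝ s̄⁻¹ mod k` iff `r * s̄ ≡ ℓ (mod k)`. -/
noncomputable def stilde (s k d : ℕ) : ℕ :=
  sInf {r : ℕ | r < k ∧ ∃ ℓ : ℤ, ℓ ≠ 0 ∧ -(d : ℤ) ≤ ℓ ∧ ℓ ≤ (d : ℤ) ∧
    (r : ℤ) * ((s : ℤ) % (k : ℤ)) ≡ ℓ [ZMOD (k : ℤ)]}
/-- `B = ⌊(s-1)/k⌋ ⬝ (k + s⬝s̃) + s ⬝ (⌈(s̄⬝s̃ - 1)/k⌉ + s̃ - 1) + s̄`,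
where `s̄ = s % k` and the ceiling is computed as `(s̄⬝s̃ - 1 + (k-1))/k`. -/
noncomputable def Bof (s k d : ℕ) : ℕ :=
  (s - 1) / k * (k + s * stilde s k d)
    + s * ((s % k * stilde s k d - 1 + (k - 1)) / k + stilde s k d - 1)
    + s % k

private lemma modeq_helper (k s : ℕ) (x ℓ : ℤ) (h : (k:ℤ) ∣ x * s - ℓ) :
    x * ((s:ℤ) % k) ≡ ℓ [ZMOD (k:ℤ)] := by
  obtain ⟨w, hw⟩ := h
  refine (Int.modEq_iff_dvd.mpr ⟨x * ((s:ℤ)/k) - w, ?_⟩)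
  rw [Int.emod_def]
  linear_combination (-1 : ℤ) * hw

private lemma stilde_lt_k (s k d : ℕ) (hk : 2 ≤ k) (hd : 1 ≤ d) (hcop : Nat.Coprime s k) :
    stilde s k d < k := by
  haveI : NeZero k := ⟨by omega⟩
  have hne : ∃ u : ℕ, u < k ∧ u * s % k = 1 % k := by
    refine ⟨((s : ZMod k)⁻¹).val, ZMod.val_lt _, ?_⟩
    have hu : IsUnit (s : ZMod k) := (ZMod.isUnit_iff_coprime s k).mpr hcop
    have : ((((s : ZMod k)⁻¹).val * s : ℕ) : ZMod k) = ((1:ℕ) : ZMod k) := by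
      push_cast
      rw [ZMod.natCast_val, ZMod.cast_id]
      exact ZMod.inv_mul_of_unit _ hu
    exact (ZMod.natCast_eq_natCast_iff _ _ _).mp this
  obtain ⟨u, hu, h1⟩ := hne
  have hdvd : (k:ℤ) ∣ (u:ℤ) * s - 1 := by
    have h2 : Nat.ModEq k (u*s) 1 := h1
    have h3 := (Nat.modEq_iff_dvd (n := k)).mp h2
    have h4 : ((u:ℤ) * s - 1) = -((1:ℤ) - (u*s : ℕ)) := by push_cast; ring
    rw [h4]; exact dvd_neg.mpr h3
  have hmem : u ∈ {r : ℕ | r < k ∧ ∃ ℓ : ℤ, ℓ ≠ 0 ∧ -(d : ℤ) ≤ ℓ ∧ ℓ ≤ (d : ℤ) ∧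
      (r : ℤ) * ((s : ℤ) % (k : ℤ)) ≡ ℓ [ZMOD (k : ℤ)]} := by
    refine ⟨hu, 1, one_ne_zero, by omega, by exact_mod_cast hd, modeq_helper k s u 1 hdvd⟩
  have h9 : stilde s k d ≤ u := Nat.sInf_le hmem
  omega

private lemma stilde_min (s k d : ℕ) (hk : 2 ≤ k) (hd : 1 ≤ d) (hcop : Nat.Coprime s k)
    (α ℓ : ℤ) (h1 : 1 ≤ α) (h2 : α < (stilde s k d : ℤ)) (hℓ0 : ℓ ≠ 0)
    (hℓ1 : -(d:ℤ) ≤ ℓ) (hℓ2 : ℓ ≤ d) (hdvd : (k:ℤ) ∣ α * s - ℓ) : False := by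
  have htk := stilde_lt_k s k d hk hd hcop
  have hαk : α < (k:ℤ) := lt_trans h2 (by exact_mod_cast htk)
  lift α to ℕ using (by omega) with a
  have hmem : a ∈ {r : ℕ | r < k ∧ ∃ ℓ : ℤ, ℓ ≠ 0 ∧ -(d : ℤ) ≤ ℓ ∧ ℓ ≤ (d : ℤ) ∧
      (r : ℤ) * ((s : ℤ) % (k : ℤ)) ≡ ℓ [ZMOD (k : ℤ)]} :=
    ⟨by exact_mod_cast hαk, ℓ, hℓ0, hℓ1, hℓ2, modeq_helper k s a ℓ hdvd⟩
  have h9 : stilde s k d ≤ a := Nat.sInf_le hmem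
  omega

private lemma Bof_eq (s k d : ℕ) (hs : 2 ≤ s) (hk : 3 ≤ k) (hcop : Nat.Coprime s k)
    (hc2 : 2 ≤ s % k * stilde s k d % k) :
    Bof s k d = s * (1 + stilde s k d + s * stilde s k d / k) := by
  rw [Bof]
  have hsb1 : 1 ≤ s % k := by
    rcases Nat.eq_zero_or_pos (s % k) with h | h
    · exfalso
      have h2 : k ∣ s := Nat.dvd_of_mod_eq_zero h
      have := Nat.Coprime.eq_one_of_dvd hcop.symm h2
      omega
    · exact h
  have hsbk : s % k < k := Nat.mod_lt _ (by omega)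
  have hsk : k * (s / k) + s % k = s := Nat.div_add_mod s k
  generalize ht : stilde s k d = t at hc2 ⊢
  generalize hq : s / k = q at hsk ⊢
  generalize hsb : s % k = sb at hsb1 hsbk hsk hc2 ⊢
  have het : k * (sb * t / k) + sb * t % k = sb * t := Nat.div_add_mod (sb * t) k
  have hck : sb * t % k < k := Nat.mod_lt _ (by omega)
  generalize he : sb * t / k = e at het ⊢
  generalize hc : sb * t % k = c at het hck hc2 ⊢
  have ht1 : 1 ≤ t := by
    rcases Nat.eq_zero_or_pos t with h | h
    · exfalso
      rw [h] at het
      have : sb * 0 = 0 := by ring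
      omega
    · exact h
  have h1 : (s - 1) / k = q := by
    have e2 : q * k = k * q := by ring
    have e1 : s - 1 = (sb - 1) + q * k := by omega
    rw [e1, Nat.add_mul_div_right _ _ (by omega : 0 < k), Nat.div_eq_of_lt (by omega)]
    omega
  have h2 : (sb * t - 1 + (k - 1)) / k = e + 1 := by
    have e2 : (e + 1) * k = k * e + k := by ring
    have e1 : sb * t - 1 + (k - 1) = (c - 2) + (e + 1) * k := by omega
    rw [e1, Nat.add_mul_div_right _ _ (by omega : 0 < k), Nat.div_eq_of_lt (by omega)]
    omega
  have h3 : s * t / k = q * t + e := by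
    have e1 : s * t = k * (q * t + e) + c := by
      zify
      have hskz : (k:ℤ) * q + sb = s := by exact_mod_cast hsk
      have hetz : (k:ℤ) * e + c = sb * t := by exact_mod_cast het
      linear_combination (-(t:ℤ)) * hskz - hetz
    rw [e1, Nat.mul_add_div (by omega : 0 < k), Nat.div_eq_of_lt hck]
    omega
  rw [h1, h2, h3]
  have e4 : e + 1 + t - 1 = e + t := by omega
  rw [e4]
  zify
  have hskz : (k:ℤ) * q + sb = s := by exact_mod_cast hsk
  linear_combination hskz

private lemma mem_of_closure (S K D : ℕ) (B : Finset ℕ) (hB : IsCoreBeta S K D B)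
    (n : ℕ) (hn : n ∈ B) (a b : ℕ) (hba : b ≤ a) (hcost : a * S + b * K ≤ n) :
    n - (a * S + b * K) ∈ B := by
  obtain ⟨-, -, hs, hsk, -⟩ := hB
  have hsub1 : ∀ j x, x ∈ B → j * S ≤ x → x - j * S ∈ B := by
    intro j
    induction j with
    | zero => intro x hx _; simpa using hx
    | succ j ih =>
      intro x hx hj
      have e1 : (j + 1) * S = j * S + S := by ring
      have h2 := ih x hx (by omega)
      have h3 := hs _ h2 (by omega)
      have e2 : x - j * S - S = x - (j + 1) * S := by omega
      rwa [e2] at h3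
  have hsub2 : ∀ j x, x ∈ B → j * (S + K) ≤ x → x - j * (S + K) ∈ B := by
    intro j
    induction j with
    | zero => intro x hx _; simpa using hx
    | succ j ih =>
      intro x hx hj
      have e1 : (j + 1) * (S + K) = j * (S + K) + (S + K) := by ring
      have h2 := ih x hx (by omega)
      have h3 := hsk _ h2 (by omega)
      have e2 : x - j * (S + K) - (S + K) = x - (j + 1) * (S + K) := by omega
      rwa [e2] at h3
  have e1 : b * (S + K) = b * S + b * K := by ring
  have e2 : (a - b) * S + b * S = a * S := by
    have h : (a - b) * S + b * S = ((a - b) + b) * S := by ring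
    rw [h, Nat.sub_add_cancel hba]
  have h1 := hsub2 b n hn (by omega)
  have h2 := hsub1 (a - b) _ h1 (by omega)
  have e3 : n - b * (S + K) - (a - b) * S = n - (a * S + b * K) := by omega
  rwa [e3] at h2

set_option maxHeartbeats 2000000 in
theorem max_hook_case_IV (s k d : ℕ) (hs : 2 ≤ s) (hk : 0 < k) (hd : 0 < d)
    (hcop : Nat.Coprime s k)
    (hcase : 1 < (s % k * stilde s k d) % k ∧ (s % k * stilde s k d) % k ≤ d ∧ d < k) :
    IsGreatest {x : ℤ | ∃ n ∈ HookLengths s k d, (n : ℤ) = x}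
      ((Bof s k d : ℤ) - s - 1) := by
  obtain ⟨hc1, hcd, hdk⟩ := hcase
  have hk3 : 3 ≤ k := by omega
  have hmm : s % k * stilde s k d % k = s * stilde s k d % k := Nat.mod_mul_mod _ _ _
  rw [hmm] at hc1 hcd
  have hBof := Bof_eq s k d hs hk3 hcop (by omega)
  have hdm : k * (s * stilde s k d / k) + s * stilde s k d % k = s * stilde s k d :=
    Nat.div_add_mod _ k
  obtain ⟨t, ht⟩ : ∃ t, stilde s k d = t := ⟨_, rfl⟩
  rw [ht] at hBof hdm hc1 hcd
  obtain ⟨m, hmdef⟩ : ∃ m, s * t / k = m := ⟨_, rfl⟩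
  obtain ⟨c, hcdef⟩ : ∃ c, s * t % k = c := ⟨_, rfl⟩
  rw [hmdef] at hBof hdm
  rw [hcdef] at hdm hc1 hcd
  -- basic facts
  have ht1 : 1 ≤ t := by
    rcases Nat.eq_zero_or_pos t with h | h
    · exfalso
      rw [h] at hdm
      have h1 : s * 0 = 0 := by ring
      have h2 : s * t / k = s * t / k := rfl
      omega
    · exact h
  have hck : c < k := by omega
  have hT2 : s * 1 ≤ s * (t + m) := Nat.mul_le_mul_left s (by omega)
  obtain ⟨M, hM⟩ : ∃ M, s * (t + m) = M + 1 := ⟨s * (t + m) - 1, by omega⟩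
  have hBM : Bof s k d = M + 1 + s := by
    have e : s * (1 + t + m) = s * (t + m) + s := by ring
    omega
  have hval : (Bof s k d : ℤ) - s - 1 = (M : ℤ) := by
    rw [hBM]; push_cast; ring
  rw [hval]
  -- integer versions
  have hMz : (s:ℤ) * (t + m) = (M:ℤ) + 1 := by exact_mod_cast hM
  have hstz : (k:ℤ) * m + c = s * t := by exact_mod_cast hdm
  have hc2z : (2:ℤ) ≤ c := by exact_mod_cast hc1
  have hcdz : (c:ℤ) ≤ d := by exact_mod_cast hcd
  have hdkz : (d:ℤ) < k := by exact_mod_cast hdk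
  have hsz : (2:ℤ) ≤ s := by exact_mod_cast hs
  have hkz : (0:ℤ) < k := by exact_mod_cast hk
  -- minimality of t
  have tmin : ∀ α ℓ : ℤ, 1 ≤ α → ℓ ≠ 0 → -(d:ℤ) ≤ ℓ → ℓ ≤ d →
      (k:ℤ) ∣ α * s - ℓ → (t:ℤ) ≤ α := by
    intro α ℓ h1 h2 h3 h4 h5
    by_contra hcon
    push_neg at hcon
    exact stilde_min s k d (by omega) (by omega) hcop α ℓ h1
      (by rw [ht]; exact hcon) h2 h3 h4 h5
  -- claim 1 : M is not representable
  have claim1 : ∀ a b : ℕ, b ≤ a → a * s + b * k = M → False := by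
    intro a b hba hEq
    have h0 : a * s + b * k + 1 = s * (t + m) := by omega
    have hz : (a:ℤ) * s + b * k + 1 = (s:ℤ) * (t + m) := by exact_mod_cast h0
    have hαs : ((t:ℤ) + m - a) * s = (b:ℤ) * k + 1 := by linear_combination -hz
    have hbk0 : (0:ℤ) ≤ (b:ℤ) * k := by positivity
    have hα1 : 1 ≤ (t:ℤ) + m - a := by
      by_contra hcon
      push_neg at hcon
      have h6 : (t:ℤ) + m - a ≤ 0 := by omega
      have h7 : ((t:ℤ) + m - a) * s ≤ 0 := mul_nonpos_of_nonpos_of_nonneg h6 (by positivity)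
      linarith
    have htα : (t:ℤ) ≤ (t:ℤ) + m - a :=
      tmin _ 1 hα1 one_ne_zero (by omega) (by exact_mod_cast hd)
        ⟨(b:ℤ), by linear_combination hαs⟩
    have hts : (t:ℤ) * s ≤ ((t:ℤ) + m - a) * s :=
      mul_le_mul_of_nonneg_right htα (by positivity)
    have hcomm : (t:ℤ) * s = (k:ℤ) * m + c := by linarith [mul_comm (t:ℤ) (s:ℤ), hstz]
    -- b*k ≥ k*m + 1, so b ≥ m+1
    have h5 : (k:ℤ) * m + 1 ≤ (b:ℤ) * k := by linarith
    have hbm : (m:ℤ) + 1 ≤ b := by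
      by_contra hcon
      push_neg at hcon
      have : (b:ℤ) ≤ m := by omega
      have h6 : (b:ℤ) * k ≤ (m:ℤ) * k := mul_le_mul_of_nonneg_right this (by positivity)
      have h7 : (m:ℤ) * k = k * m := mul_comm _ _
      linarith
    have ham : (m:ℤ) + 1 ≤ a := by
      have : (b:ℤ) ≤ a := by exact_mod_cast hba
      linarith
    have h8 : ((m:ℤ) + 1) * s ≤ (a:ℤ) * s := mul_le_mul_of_nonneg_right ham (by positivity)
    have h9 : ((m:ℤ) + 1) * k ≤ (b:ℤ) * k := mul_le_mul_of_nonneg_right hbm (by positivity)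
    have hEqz : (a:ℤ) * s + b * k = M := by exact_mod_cast hEq
    have ex1 : ((m:ℤ) + 1) * s = (s:ℤ) * m + s := by ring
    have ex2 : ((m:ℤ) + 1) * k = (k:ℤ) * m + k := by ring
    have ex3 : (s:ℤ) * (t + m) = s * t + s * m := by ring
    have ex4 : (t:ℤ) * s = (s:ℤ) * t := by ring
    linarith
  -- key lemma: no two costs within distance d
  have key : ∀ a b a' b' : ℕ, b ≤ a → b' ≤ a' → a * s + b * k ≤ M → a' * s + b' * k ≤ M →
      (1:ℤ) ≤ ((a':ℤ) * s + b' * k) - ((a:ℤ) * s + b * k) →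
      ((a':ℤ) * s + b' * k) - ((a:ℤ) * s + b * k) ≤ d → False := by
    intro a b a' b' hba hba' hcM hcM' hΔ1 hΔd
    have hbaz : (b:ℤ) ≤ a := by exact_mod_cast hba
    have hbaz' : (b':ℤ) ≤ a' := by exact_mod_cast hba'
    have hcMz : (a:ℤ) * s + b * k ≤ M := by exact_mod_cast hcM
    have hcMz' : (a':ℤ) * s + b' * k ≤ M := by exact_mod_cast hcM'
    have hb0 : (0:ℤ) ≤ b := by positivity
    have hb0' : (0:ℤ) ≤ b' := by positivity
    have hcomm : (t:ℤ) * s = (k:ℤ) * m + c := by linarith [mul_comm (t:ℤ) (s:ℤ), hstz]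
    rcases lt_trichotomy ((a':ℤ) - a) 0 with hneg | hzero | hpos
    · -- α̃ = a - a' ≥ 1, use ℓ = -Δ
      have hα1 : 1 ≤ (a:ℤ) - a' := by omega
      have hdvd : (k:ℤ) ∣ ((a:ℤ) - a') * s - (-(((a':ℤ) * s + b' * k) - ((a:ℤ) * s + b * k))) :=
        ⟨(b':ℤ) - b, by ring⟩
      have htα : (t:ℤ) ≤ (a:ℤ) - a' :=
        tmin _ _ hα1 (by omega) (by omega) (by omega) hdvd
      have hts : (t:ℤ) * s ≤ ((a:ℤ) - a') * s :=
        mul_le_mul_of_nonneg_right htα (by positivity)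
      have e : ((b':ℤ) - b) * k =
          (((a':ℤ) * s + b' * k) - ((a:ℤ) * s + b * k)) + ((a:ℤ) - a') * s := by ring
      have h5 : (k:ℤ) * m + c + 1 ≤ ((b':ℤ) - b) * k := by linarith
      have hβ : (m:ℤ) + 1 ≤ (b':ℤ) - b := by
        by_contra hcon
        push_neg at hcon
        have h6 : (b':ℤ) - b ≤ m := by omega
        have h7 : ((b':ℤ) - b) * k ≤ (m:ℤ) * k := mul_le_mul_of_nonneg_right h6 (by positivity)
        have h8 : (m:ℤ) * k = k * m := mul_comm _ _
        linarith
      have hb'm : (m:ℤ) + 1 ≤ b' := by linarith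
      have ha'm : (m:ℤ) + 1 ≤ a' := by linarith
      have h8 : ((m:ℤ) + 1) * s ≤ (a':ℤ) * s := mul_le_mul_of_nonneg_right ha'm (by positivity)
      have h9 : ((m:ℤ) + 1) * k ≤ (b':ℤ) * k := mul_le_mul_of_nonneg_right hb'm (by positivity)
      have ex1 : ((m:ℤ) + 1) * s = (s:ℤ) * m + s := by ring
      have ex2 : ((m:ℤ) + 1) * k = (k:ℤ) * m + k := by ring
      have ex3 : (s:ℤ) * (t + m) = s * t + s * m := by ring
      have ex4 : (t:ℤ) * s = (s:ℤ) * t := by ring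
      linarith
    · -- a' = a : difference is (b'-b)*k, impossible in [1,d]
      have hβk : (((a':ℤ) * s + b' * k) - ((a:ℤ) * s + b * k)) = ((b':ℤ) - b) * k := by
        have : (a':ℤ) = a := by omega
        rw [this]; ring
      rw [hβk] at hΔ1 hΔd
      rcases le_or_gt ((b':ℤ) - b) 0 with h | h
      · have : ((b':ℤ) - b) * k ≤ 0 := mul_nonpos_of_nonpos_of_nonneg h (by positivity)
        linarith
      · have h1 : (1:ℤ) ≤ (b':ℤ) - b := by omega
        have : (1:ℤ) * k ≤ ((b':ℤ) - b) * k := mul_le_mul_of_nonneg_right h1 (by positivity)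
        linarith
    · -- α = a' - a ≥ 1, use ℓ = Δ
      have hα1 : 1 ≤ (a':ℤ) - a := by omega
      have hdvd : (k:ℤ) ∣ ((a':ℤ) - a) * s - (((a':ℤ) * s + b' * k) - ((a:ℤ) * s + b * k)) :=
        ⟨(b:ℤ) - b', by ring⟩
      have htα : (t:ℤ) ≤ (a':ℤ) - a :=
        tmin _ _ hα1 (by omega) (by omega) hΔd hdvd
      have hts : (t:ℤ) * s ≤ ((a':ℤ) - a) * s :=
        mul_le_mul_of_nonneg_right htα (by positivity)
      have e : ((b':ℤ) - b) * k =
          (((a':ℤ) * s + b' * k) - ((a:ℤ) * s + b * k)) - ((a':ℤ) - a) * s := by ring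
      have h5 : ((b':ℤ) - b) * k + (k:ℤ) * m ≤ (d:ℤ) - c := by linarith
      have hβ : (b':ℤ) - b ≤ -(m:ℤ) := by
        by_contra hcon
        push_neg at hcon
        have h6 : (1:ℤ) ≤ (b':ℤ) - b + m := by omega
        have h7 : (1:ℤ) * k ≤ ((b':ℤ) - b + m) * k := mul_le_mul_of_nonneg_right h6 (by positivity)
        have h8 : ((b':ℤ) - b + m) * k = ((b':ℤ) - b) * k + m * k := by ring
        have h9 : (m:ℤ) * k = k * m := mul_comm _ _
        linarith
      have hbm : (m:ℤ) ≤ b := by linarith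
      have ha'tm : (m:ℤ) + t ≤ a' := by linarith
      have h8 : ((m:ℤ) + t) * s ≤ (a':ℤ) * s := mul_le_mul_of_nonneg_right ha'tm (by positivity)
      have h9 : (0:ℤ) ≤ (b':ℤ) * k := by positivity
      have ex3 : (s:ℤ) * (t + m) = s * t + s * m := by ring
      have ex4 : (t:ℤ) * s = (s:ℤ) * t := by ring
      have ex5 : ((m:ℤ) + t) * s = (s:ℤ) * t + s * m := by ring
      linarith
  -- the optimal β-set
  have hs1 : 1 ≤ s := by omega
  have hk1 : 1 ≤ k := by omega
  set I : Finset (ℕ × ℕ) := (Finset.range (M + 1) ×ˢ Finset.range (M + 1)).filter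
    (fun p => p.2 ≤ p.1 ∧ p.1 * s + p.2 * k ≤ M) with hI
  set B₀ : Finset ℕ := I.image (fun p => M - (p.1 * s + p.2 * k)) with hB₀
  have hmem : ∀ x, x ∈ B₀ ↔ ∃ a b : ℕ, b ≤ a ∧ a * s + b * k ≤ M ∧ x = M - (a * s + b * k) := by
    intro x
    simp only [hB₀, hI, Finset.mem_image, Finset.mem_filter, Finset.mem_product,
      Finset.mem_range]
    constructor
    · rintro ⟨⟨a, b⟩, ⟨⟨-, -⟩, hba, hc⟩, rfl⟩
      exact ⟨a, b, hba, hc, rfl⟩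
    · rintro ⟨a, b, hba, hc, rfl⟩
      have h1 : a * 1 ≤ a * s := Nat.mul_le_mul_left a hs1
      have h2 : b * 1 ≤ b * k := Nat.mul_le_mul_left b hk1
      have h3 : a * 1 = a := mul_one a
      have h4 : b * 1 = b := mul_one b
      exact ⟨⟨a, b⟩, ⟨⟨by omega, by omega⟩, hba, hc⟩, rfl⟩
  have hMB : M ∈ B₀ := by
    rw [hmem]
    exact ⟨0, 0, le_refl 0, by omega, by omega⟩
  have hcore : IsCoreBeta s k d B₀ := by
    refine ⟨⟨M, hMB⟩, ?_, ?_, ?_, ?_⟩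
    · -- positivity
      intro x hx
      rw [hmem] at hx
      obtain ⟨a, b, hba, hc, rfl⟩ := hx
      rcases Nat.eq_zero_or_pos (M - (a * s + b * k)) with h | h
      · exact absurd (claim1 a b hba (by omega)) id
      · exact h
    · -- closed under -s
      intro x hx hsx
      rw [hmem] at hx
      obtain ⟨a, b, hba, hc, rfl⟩ := hx
      rw [hmem]
      have e1 : (a + 1) * s = a * s + s := by ring
      exact ⟨a + 1, b, by omega, by omega, by omega⟩
    · -- closed under -(s+k)
      intro x hx hsx
      rw [hmem] at hx
      obtain ⟨a, b, hba, hc, rfl⟩ := hx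
      rw [hmem]
      have e1 : (a + 1) * s = a * s + s := by ring
      have e2 : (b + 1) * k = b * k + k := by ring
      exact ⟨a + 1, b + 1, by omega, by omega, by omega⟩
    · -- d-distinct
      intro x hx y hy hxy
      rw [hmem] at hx hy
      obtain ⟨a, b, hba, hc, rfl⟩ := hx
      obtain ⟨a', b', hba', hc', rfl⟩ := hy
      by_contra hcon
      push_neg at hcon
      have hxz : ((M - (a * s + b * k) : ℕ) : ℤ) = (M:ℤ) - ((a:ℤ) * s + b * k) := by
        push_cast [Nat.cast_sub hc]
        ring
      have hyz : ((M - (a' * s + b' * k) : ℕ) : ℤ) = (M:ℤ) - ((a':ℤ) * s + b' * k) := by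
        push_cast [Nat.cast_sub hc']
        ring
      rw [hxz, hyz] at hcon
      have habs := abs_le.mp hcon
      have hne : ((a:ℤ) * s + b * k) ≠ ((a':ℤ) * s + b' * k) := by
        intro hEq
        apply hxy
        have : a * s + b * k = a' * s + b' * k := by exact_mod_cast hEq
        omega
      rcases lt_or_gt_of_ne hne with h | h
      · exact key a b a' b' hba hba' hc hc' (by omega) (by linarith)
      · exact key a' b' a b hba' hba hc' hc (by omega) (by linarith)
  constructor
  · -- membership
    exact ⟨M, ⟨B₀, hcore, hMB⟩, rfl⟩
  · -- upper bound
    rintro x ⟨n, ⟨Bs, hBs, hnB⟩, rfl⟩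
    show (n:ℤ) ≤ M
    by_contra hcon
    push_neg at hcon
    have hnM : M + 1 ≤ n := by exact_mod_cast hcon
    have e1 : m * s = s * m := mul_comm m s
    have e2 : (m + t) * s = s * t + s * m := by ring
    have e3 : k * m = m * k := mul_comm k m
    have h0 : (0 : ℕ) * k = 0 := by ring
    have hstn : s * t + s * m ≤ n := by
      have e5 : s * (t + m) = s * t + s * m := by ring
      omega
    have hc1n : m * s + m * k ≤ n := by omega
    have hc2n : (m + t) * s + 0 * k ≤ n := by omega
    have hy1 := mem_of_closure s k d Bs hBs n hnB m m (le_refl m) hc1n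
    have hy2 := mem_of_closure s k d Bs hBs n hnB (m + t) 0 (by omega) hc2n
    obtain ⟨-, -, -, -, hdist⟩ := hBs
    have hne : n - (m * s + m * k) ≠ n - ((m + t) * s + 0 * k) := by omega
    have hd5 := hdist _ hy1 _ hy2 hne
    have hxz : ((n - (m * s + m * k) : ℕ) : ℤ) = (n:ℤ) - ((m:ℤ) * s + m * k) := by
      push_cast [Nat.cast_sub hc1n]
      ring
    have hyz : ((n - ((m + t) * s + 0 * k) : ℕ) : ℤ) = (n:ℤ) - (((m:ℤ) + t) * s) := by
      push_cast [Nat.cast_sub hc2n]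
      ring
    rw [hxz, hyz] at hd5
    have hcomm : (t:ℤ) * s = (k:ℤ) * m + c := by linarith [mul_comm (t:ℤ) (s:ℤ), hstz]
    have hdiff : (n:ℤ) - ((m:ℤ) * s + m * k) - ((n:ℤ) - (((m:ℤ) + t) * s)) = c := by
      have h1 : (m:ℤ) * k = k * m := mul_comm _ _
      linarith [mul_comm (m:ℤ) (s:ℤ)]
    have : |(n:ℤ) - ((m:ℤ) * s + m * k) - ((n:ℤ) - (((m:ℤ) + t) * s))| = c := by
      rw [hdiff]
      exact abs_of_nonneg (by positivity)
    rw [this] at hd5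
    linarith
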